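/- Let n ≥ 3, 1 ≤ i ≤ n, and f_i(x) = x_i (1+|x|²)^{-n/2} on ℝⁿ. Then −Δ f_i = μ₁ f_i/(1+|x|²)² with μ₁ = 4·1·n + n(n−2) = n(n+2). -/

import Mathlib

open Real

theorem laplacian_fi (n : ℕ) (hn : 3 ≤ n) (i : Fin n)
    (f : EuclideanSpace ℝ (Fin n) → ℝ)
    (hf : ∀ x, f x = x i * (1 + ‖x‖ ^ 2) ^ (-(n : ℝ) / 2)) :
    ∀ x, -(∑ j : Fin n, iteratedFDeriv ℝ 2 f x
          ![EuclideanSpace.single j 1, EuclideanSpace.single j 1])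
      = (n : ℝ) * ((n : ℝ) + 2) * (1 + ‖x‖ ^ 2) ^ (-(2 : ℝ)) * f x := by
  obtain rfl : f = fun x : EuclideanSpace ℝ (Fin n) =>
      x i * (1 + ‖x‖ ^ 2) ^ (-(n : ℝ) / 2) := funext hf
  intro x
  set α : ℝ := -(n : ℝ) / 2 with hα
  have hpos : ∀ y : EuclideanSpace ℝ (Fin n), (0:ℝ) < 1 + ‖y‖ ^ 2 := by
    intro y; positivity
  have hne : ∀ y : EuclideanSpace ℝ (Fin n), (1:ℝ) + ‖y‖ ^ 2 ≠ 0 :=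
    fun y => (hpos y).ne'
  -- coordinate functions as CLMs
  have heq : ∀ k : Fin n, (fun z : EuclideanSpace ℝ (Fin n) => z k)
      = fun z => (innerSL ℝ (EuclideanSpace.single k (1:ℝ))) z := by
    intro k; funext z; simp [EuclideanSpace.inner_single_left]
  have hcoord : ∀ (k : Fin n) (y : EuclideanSpace ℝ (Fin n)),
      HasFDerivAt (fun z : EuclideanSpace ℝ (Fin n) => z k)
        (innerSL ℝ (EuclideanSpace.single k (1:ℝ))) y := by
    intro k y
    rw [heq k]
    exact (innerSL ℝ (EuclideanSpace.single k (1:ℝ))).hasFDerivAt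
  -- rpow of 1 + ‖·‖²
  have hp : ∀ (a : ℝ) (y : EuclideanSpace ℝ (Fin n)),
      HasFDerivAt (fun z : EuclideanSpace ℝ (Fin n) => ((1:ℝ) + ‖z‖^2) ^ a)
        ((a * ((1:ℝ)+‖y‖^2) ^ (a-1)) • (2 • innerSL ℝ y)) y :=
    fun a y => by
      have h := (Real.hasDerivAt_rpow_const (x := 1 + ‖y‖ ^ 2) (p := a) (Or.inl (hne y))).comp_hasFDerivAt y
        (((hasStrictFDerivAt_norm_sq y).hasFDerivAt).const_add 1)
      exact h
  -- derivative of f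
  have hDf : ∀ y : EuclideanSpace ℝ (Fin n),
      HasFDerivAt (fun z : EuclideanSpace ℝ (Fin n) => z i * (1 + ‖z‖ ^ 2) ^ α)
        ((y i) • ((α * ((1:ℝ)+‖y‖^2) ^ (α-1)) • (2 • innerSL ℝ y))
          + (((1:ℝ)+‖y‖^2) ^ α) • innerSL ℝ (EuclideanSpace.single i (1:ℝ))) y :=
    fun y => (hcoord i y).mul (hp α y)
  -- smoothness
  have hsm : ContDiff ℝ 2 (fun z : EuclideanSpace ℝ (Fin n) => z i * (1 + ‖z‖ ^ 2) ^ α) := by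
    have h1 : ContDiff ℝ 2 (fun z : EuclideanSpace ℝ (Fin n) => z i) := by
      rw [heq i]; exact (innerSL ℝ (EuclideanSpace.single i (1:ℝ))).contDiff
    have h2 : ContDiff ℝ 2 (fun z : EuclideanSpace ℝ (Fin n) => (1 + ‖z‖ ^ 2) ^ α) :=
      (contDiff_const.add (contDiff_norm_sq ℝ)).rpow_const_of_ne hne
    exact h1.mul h2
  set t : ℝ := 1 + ‖x‖ ^ 2 with ht
  -- per-direction second derivative
  have hterm : ∀ j : Fin n,
      iteratedFDeriv ℝ 2 (fun z : EuclideanSpace ℝ (Fin n) => z i * (1 + ‖z‖ ^ 2) ^ α) x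
          ![EuclideanSpace.single j 1, EuclideanSpace.single j 1]
        = (if i = j then 4*α*(x j)*t^(α-1) else 0)
          + (x j)^2 * (4*α*(α-1)*(x i)*t^(α-2)) + 2*α*(x i)*t^(α-1) := by
    intro j
    rw [iteratedFDeriv_two_apply]
    simp only [Matrix.cons_val_zero, Matrix.cons_val_one, Matrix.head_cons]
    have hdiff2 : DifferentiableAt ℝ
        (fderiv ℝ (fun z : EuclideanSpace ℝ (Fin n) => z i * (1 + ‖z‖ ^ 2) ^ α)) x :=
      ((hsm.fderiv_right (m := 1) one_add_one_eq_two.le).differentiable (by norm_num)).differentiableAt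
    have hstep : fderiv ℝ (fderiv ℝ (fun z : EuclideanSpace ℝ (Fin n) => z i * (1 + ‖z‖ ^ 2) ^ α)) x
          (EuclideanSpace.single j 1) (EuclideanSpace.single j 1)
        = fderiv ℝ (fun y => fderiv ℝ (fun z : EuclideanSpace ℝ (Fin n) => z i * (1 + ‖z‖ ^ 2) ^ α) y
            (EuclideanSpace.single j 1)) x (EuclideanSpace.single j 1) := by
      have h := fderiv_comp (𝕜 := ℝ) x
        (ContinuousLinearMap.apply ℝ ℝ
          (EuclideanSpace.single j (1:ℝ))).differentiableAt hdiff2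
      rw [ContinuousLinearMap.fderiv] at h
      have h2 : ((ContinuousLinearMap.apply ℝ ℝ (EuclideanSpace.single j (1:ℝ))) ∘
          (fderiv ℝ (fun z : EuclideanSpace ℝ (Fin n) => z i * (1 + ‖z‖ ^ 2) ^ α)))
          = fun y => fderiv ℝ (fun z : EuclideanSpace ℝ (Fin n) => z i * (1 + ‖z‖ ^ 2) ^ α) y
            (EuclideanSpace.single j 1) := rfl
      rw [h2] at h
      rw [h]
      rfl
    rw [hstep]
    -- rewrite the inner function
    have hgfun : (fun y => fderiv ℝ (fun z : EuclideanSpace ℝ (Fin n) => z i * (1 + ‖z‖ ^ 2) ^ α) y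
          (EuclideanSpace.single j 1))
        = fun y : EuclideanSpace ℝ (Fin n) =>
            y i * (α * ((1:ℝ)+‖y‖^2)^(α-1) * (2 * (y j)))
            + ((1:ℝ)+‖y‖^2)^α * ((EuclideanSpace.single j (1:ℝ) : EuclideanSpace ℝ (Fin n)) i) := by
      funext y
      rw [(hDf y).fderiv]
      simp [EuclideanSpace.inner_single_left, EuclideanSpace.inner_single_right,
        real_inner_comm, eq_comm]
    rw [hgfun]
    have hQ := ((hcoord i x).mul (((hp (α-1) x).const_mul α).mul
        ((hcoord j x).const_mul 2))).add
      ((hp α x).mul_const ((EuclideanSpace.single j (1:ℝ) : EuclideanSpace ℝ (Fin n)) i))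
    rw [(show HasFDerivAt (fun y : EuclideanSpace ℝ (Fin n) => y i * (α * ((1:ℝ)+‖y‖^2)^(α-1) * (2 * (y j)))
        + ((1:ℝ)+‖y‖^2)^α * ((EuclideanSpace.single j (1:ℝ) : EuclideanSpace ℝ (Fin n)) i)) _ x from hQ).fderiv]
    simp [EuclideanSpace.inner_single_left, EuclideanSpace.inner_single_right,
      EuclideanSpace.single_apply]
    by_cases hij : i = j <;> simp [hij, @eq_comm _ j i, ht, EuclideanSpace.inner_single_left,
      EuclideanSpace.inner_single_right, real_inner_comm] <;> ring_nf
  rw [Finset.sum_congr rfl (fun j _ => hterm j)]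
  rw [Finset.sum_add_distrib, Finset.sum_add_distrib, ← Finset.sum_mul,
    Finset.sum_const, Finset.card_univ, Fintype.card_fin, nsmul_eq_mul]
  rw [Finset.sum_ite_eq Finset.univ i (fun j => 4*α*(x j)*t^(α-1))]
  simp only [Finset.mem_univ, if_true]
  have hns : ∑ j, (x j)^2 = ‖x‖^2 := by
    rw [EuclideanSpace.norm_eq, Real.sq_sqrt (by positivity)]
    simp [sq_abs]
  rw [hns]
  have htne : t ≠ 0 := hne x
  have htpos : (0:ℝ) < t := hpos x
  have e1 : t ^ (α - 1) = t ^ α / t := by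
    rw [Real.rpow_sub htpos, Real.rpow_one]
  have e2 : t ^ (α - 2) = t ^ α / t ^ 2 := by
    rw [Real.rpow_sub htpos, show (2:ℝ) = ((2:ℕ):ℝ) by norm_num, Real.rpow_natCast]
  have e3 : t ^ (-(2:ℝ)) = 1 / t ^ 2 := by
    rw [show -(2:ℝ) = ((0:ℝ) - 2) by ring, Real.rpow_sub htpos, Real.rpow_zero,
      show (2:ℝ) = ((2:ℕ):ℝ) by norm_num, Real.rpow_natCast]
  have hx2 : ‖x‖^2 = t - 1 := by rw [ht]; ring
  rw [e1, e2, e3, hx2, hα]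
  field_simp
  ring
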